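/- Let B be ℂ³ with basis x, y, z and bilinear multiplication whose only nonzero products of basis elements are z·x = x + y and z·y = y (this makes B a Leibniz algebra). Then every t = c₁x + c₂y + c₃z with c₁ ≠ 0 and c₃ ≠ 0 satisfies that {t, t², t³} is linearly independent; in particular B is cyclic. -/

import Mathlib

/-!
In coordinates, `u · v = u₂ • L v` with `L = [[1,0,0],[1,1,0],[0,0,0]]`, so the powers of
`t = (c₁, c₂, c₃)` are `t^(k+1) = c₃^k • L^k t = c₃^k • (c₁, k c₁ + c₂, 0)`. The matrix with rows
`t, t², t³` then has determinant `c₁² c₃⁴`, which is nonzero exactly when `c₁ ≠ 0 ≠ c₃`.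
-/

/-- `lpow μ x k` is the left-normed power `x^(k+1)`; so `lpow μ x 0 = x`,
`lpow μ x 1 = x·x = x²`, `lpow μ x 2 = x·x² = x³`, etc. -/
def lpow {A : Type*} [AddCommGroup A] [Module ℂ A]
    (μ : A →ₗ[ℂ] A →ₗ[ℂ] A) (x : A) : ℕ → A
  | 0 => x
  | n + 1 => μ x (lpow μ x n)
/-- The algebra B = ℂ³ with basis x = e₀, y = e₁, z = e₂ whose only nonzero products
of basis elements are z·x = x + y and z·y = y; thus u·v = u₂ • L_z(v) with
L_z(x) = x + y, L_z(y) = y, L_z(z) = 0. -/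
noncomputable def mulB : (Fin 3 → ℂ) →ₗ[ℂ] (Fin 3 → ℂ) →ₗ[ℂ] (Fin 3 → ℂ) :=
  (LinearMap.proj 2).smulRight (Matrix.mulVecLin !![1,0,0;1,1,0;0,0,0])

noncomputable def xB : Fin 3 → ℂ := ![1,0,0]
noncomputable def yB : Fin 3 → ℂ := ![0,1,0]
noncomputable def zB : Fin 3 → ℂ := ![0,0,1]

open Module Matrix

theorem exists_basis_eq_lpow_of_linearIndependent {A : Type*} [AddCommGroup A] [Module ℂ A]
    [FiniteDimensional ℂ A] {μ : A →ₗ[ℂ] A →ₗ[ℂ] A} {t : A} {n : ℕ} (hn : finrank ℂ A = n)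
    (ht : LinearIndependent ℂ fun i : Fin n ↦ lpow μ t i) :
    ∃ e : Basis (Fin n) ℂ A, ∀ i, e i = lpow μ t i :=
  ⟨basisOfLinearIndependentOfCardEqFinrank' _ ht (by simp [hn]),
    congrFun (coe_basisOfLinearIndependentOfCardEqFinrank' _ _ _)⟩

theorem smul_xB_add_smul_yB_add_smul_zB (c₁ c₂ c₃ : ℂ) :
    c₁ • xB + c₂ • yB + c₃ • zB = ![c₁, c₂, c₃] := by
  ext i
  fin_cases i <;> simp [xB, yB, zB]

theorem mulB_apply (u v : Fin 3 → ℂ) : mulB u v = ![u 2 * v 0, u 2 * (v 0 + v 1), 0] := by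
  ext i
  fin_cases i <;> simp [mulB, dotProduct, Fin.sum_univ_three]

theorem lpow_mulB_succ (c₁ c₂ c₃ : ℂ) (k : ℕ) :
    lpow mulB ![c₁, c₂, c₃] (k + 1) =
      ![c₃ ^ (k + 1) * c₁, c₃ ^ (k + 1) * ((k + 1) * c₁ + c₂), 0] := by
  induction k with
  | zero => simp [lpow, mulB_apply, mul_add]
  | succ k ih =>
    rw [lpow, ih, mulB_apply]
    ext i
    fin_cases i <;> simp <;> ring

theorem linearIndependent_lpow_mulB {c₁ c₂ c₃ : ℂ} (h₁ : c₁ ≠ 0) (h₃ : c₃ ≠ 0) :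
    LinearIndependent ℂ
      ![![c₁, c₂, c₃], lpow mulB ![c₁, c₂, c₃] 1, lpow mulB ![c₁, c₂, c₃] 2] := by
  have hsq : lpow mulB ![c₁, c₂, c₃] 1 = ![c₃ * c₁, c₃ * (c₁ + c₂), 0] := by
    simpa using lpow_mulB_succ c₁ c₂ c₃ 0
  have hcube : lpow mulB ![c₁, c₂, c₃] 2 = ![c₃ ^ 2 * c₁, c₃ ^ 2 * (2 * c₁ + c₂), 0] := by
    simpa [one_add_one_eq_two] using lpow_mulB_succ c₁ c₂ c₃ 1
  let T : Matrix (Fin 3) (Fin 3) ℂ :=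
    !![c₁, c₂, c₃; c₃ * c₁, c₃ * (c₁ + c₂), 0; c₃ ^ 2 * c₁, c₃ ^ 2 * (2 * c₁ + c₂), 0]
  have hdet : T.det = c₁ ^ 2 * c₃ ^ 4 := by
    simp only [T, det_fin_three, of_apply, cons_val', cons_val_zero, cons_val_one, cons_val,
      cons_val_fin_one]
    ring
  rw [hsq, hcube]
  exact linearIndependent_rows_of_det_ne_zero (A := T) (by simp [hdet, h₁, h₃])

theorem vec_lpow_fin_three {A : Type*} [AddCommGroup A] [Module ℂ A] (μ : A →ₗ[ℂ] A →ₗ[ℂ] A)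
    (t : A) : ![t, lpow μ t 1, lpow μ t 2] = fun i : Fin 3 ↦ lpow μ t i := by
  ext i
  fin_cases i <;> rfl

/-- Every t = c₁x + c₂y + c₃z with c₁ ≠ 0 and c₃ ≠ 0 has {t, t², t³}
linearly independent; in particular B is cyclic. -/
theorem algebraB_class6_cyclic :
    (∀ c₁ c₂ c₃ : ℂ, c₁ ≠ 0 → c₃ ≠ 0 →
      LinearIndependent ℂ
        ![c₁ • xB + c₂ • yB + c₃ • zB,
          lpow mulB (c₁ • xB + c₂ • yB + c₃ • zB) 1,
          lpow mulB (c₁ • xB + c₂ • yB + c₃ • zB) 2]) ∧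
    (∃ t : Fin 3 → ℂ, ∃ e : Module.Basis (Fin 3) ℂ (Fin 3 → ℂ),
        ∀ i : Fin 3, e i = lpow mulB t (i : ℕ)) := by
  refine ⟨fun c₁ c₂ c₃ h₁ h₃ ↦ ?_, ⟨![1, 0, 1], ?_⟩⟩
  · rw [smul_xB_add_smul_yB_add_smul_zB]
    exact linearIndependent_lpow_mulB h₁ h₃
  · refine exists_basis_eq_lpow_of_linearIndependent (by simp) ?_
    rw [← vec_lpow_fin_three]
    exact linearIndependent_lpow_mulB one_ne_zero one_ne_zero
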